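/- Let Ω be a finite connected bipartite subgraph of a weighted graph and p > 1. If f is an eigenfunction of the Dirichlet p-Laplacian on Ω satisfying f(x)·f(y) < 0 for every edge x ∼ y with x, y ∈ Ω, then f is a maximum eigenfunction, i.e., its eigenvalue equals λ_{m,p}(Ω) = sup_{u≢0} E_p(u)/‖u‖_{p,Ω}^p. -/

import Mathlib

open scoped BigOperators

namespace PGraph

variable {V : Type*}

/-- The `p`-Dirichlet energy `E_p(u) = (1/2) ∑_{x,y} μ_{xy} |u(y)-u(x)|^p`. -/
noncomputable def energy (μ : V → V → ℝ) (p : ℝ) (u : V → ℝ) : ℝ :=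
  (1 / 2) * ∑ᶠ x : V, ∑ᶠ y : V, μ x y * |u y - u x| ^ p

/-- `‖u‖_{p,Ω}^p = ∑_{x∈Ω} |u(x)|^p ν_x`. -/
noncomputable def pnormP (ν : V → ℝ) (Ω : Finset V) (p : ℝ) (u : V → ℝ) : ℝ :=
  ∑ x ∈ Ω, |u x| ^ p * ν x

/-- The `p`-Laplacian `Δ_p u(x) = (1/ν_x) ∑_y μ_{xy} |u(y)-u(x)|^{p-2}(u(y)-u(x))`. -/
noncomputable def plap (μ : V → V → ℝ) (ν : V → ℝ) (p : ℝ) (u : V → ℝ) (x : V) : ℝ :=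
  (1 / ν x) * ∑ᶠ y : V, μ x y * (|u y - u x| ^ (p - 2) * (u y - u x))

/-- `u` is an eigenfunction of the Dirichlet `p`-Laplacian on `Ω` with eigenvalue `lam`:
`u` vanishes outside `Ω` (zero extension), `u ≢ 0` on `Ω`, and
`Δ_p u = -lam |u|^{p-2} u` on `Ω`. -/
def IsDirEigenfun (μ : V → V → ℝ) (ν : V → ℝ) (Ω : Finset V) (p : ℝ)
    (u : V → ℝ) (lam : ℝ) : Prop :=
  (∀ x, x ∉ Ω → u x = 0) ∧ (∃ x ∈ Ω, u x ≠ 0) ∧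
    ∀ x ∈ Ω, plap μ ν p u x = -lam * (|u x| ^ (p - 2) * u x)

/-- The first Dirichlet eigenvalue, via the Rayleigh quotient characterization. -/
noncomputable def lam1 (μ : V → V → ℝ) (ν : V → ℝ) (Ω : Finset V) (p : ℝ) : ℝ :=
  sInf {t : ℝ | ∃ u : V → ℝ, (∀ x, x ∉ Ω → u x = 0) ∧ (∃ x ∈ Ω, u x ≠ 0) ∧
    t = energy μ p u / pnormP ν Ω p u}

/-- The maximum Dirichlet eigenvalue, via the Rayleigh quotient characterization. -/
noncomputable def lamMax (μ : V → V → ℝ) (ν : V → ℝ) (Ω : Finset V) (p : ℝ) : ℝ :=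
  sSup {t : ℝ | ∃ u : V → ℝ, (∀ x, x ∉ Ω → u x = 0) ∧ (∃ x ∈ Ω, u x ≠ 0) ∧
    t = energy μ p u / pnormP ν Ω p u}

/-- The induced subgraph on `Ω` is connected. -/
def ConnOn (μ : V → V → ℝ) (Ω : Finset V) : Prop :=
  ∀ x ∈ Ω, ∀ y ∈ Ω,
    Relation.ReflTransGen (fun a b => a ∈ Ω ∧ b ∈ Ω ∧ 0 < μ a b) x y

/-- The induced subgraph on `Ω` is bipartite with parts `V₁, V₂`. -/
def BipartiteOn (μ : V → V → ℝ) (Ω : Finset V) : Prop :=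
  ∃ V₁ V₂ : Set V, (Ω : Set V) = V₁ ∪ V₂ ∧ Disjoint V₁ V₂ ∧
    ∀ x ∈ Ω, ∀ y ∈ Ω, 0 < μ x y → ((x ∈ V₁ ∧ y ∈ V₂) ∨ (x ∈ V₂ ∧ y ∈ V₁))

/-- A locally finite weighted graph: symmetric nonnegative edge weights without
self-loops, finitely many neighbours at each vertex, positive vertex weights. -/
structure IsWeightedGraph (μ : V → V → ℝ) (ν : V → ℝ) : Prop where
  symm : ∀ x y, μ x y = μ y x
  nonneg : ∀ x y, 0 ≤ μ x y
  loopless : ∀ x, μ x x = 0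
  locFin : ∀ x, (Function.support (μ x)).Finite
  nuPos : ∀ x, 0 < ν x

/-- The edge boundary measure `|∂U|_μ` of a finite vertex set `U`. -/
noncomputable def bdryWt (μ : V → V → ℝ) (U : Finset V) : ℝ :=
  ∑ x ∈ U, ∑ᶠ y ∈ {z : V | z ∉ U}, μ x y

/-- The Dirichlet Cheeger constant `h_{μ,ν}(Ω) = min_{∅ ≠ U ⊆ Ω} |∂U|_μ / |U|_ν`. -/
noncomputable def cheeger (μ : V → V → ℝ) (ν : V → ℝ) (Ω : Finset V) : ℝ :=
  sInf {t : ℝ | ∃ U : Finset V, U ⊆ Ω ∧ U.Nonempty ∧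
    t = bdryWt μ U / ∑ x ∈ U, ν x}

end PGraph

/-!
Because `f` changes sign along every edge, `g = |f|` satisfies `|f y - f x| = g x + g y` on
every edge and the eigenvalue equation becomes the signless equation
`∑_y μ_xy (g x + g y)^(p-1) = λ ν_x (g x)^(p-1)` on `Ω`; pairing it with `g` gives
`E_p(f) = λ ‖f‖^p`. For any `u` vanishing off `Ω`, Radon's inequality with weights `g x, g y`
bounds `|u y - u x|^p ≤ (|u x| + |u y|)^p` by `(g x + g y)^(p-1) (t x + t y)` with
`t = |u|^p / g^(p-1)`; pairing the signless equation with `t` and symmetrizing the edge sum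
yields `E_p(u) ≤ λ ‖u‖^p`. So `λ` is the largest Rayleigh quotient.
-/

namespace PGraph

open Real Set

lemma abs_sub_eq_abs_add_abs_of_mul_nonpos {a b : ℝ} (hab : a * b ≤ 0) :
    |b - a| = |a| + |b| := by
  rcases mul_nonpos_iff.1 hab with ⟨ha, hb⟩ | ⟨ha, hb⟩
  · rw [abs_of_nonpos (by linarith), abs_of_nonneg ha, abs_of_nonpos hb]; ring
  · rw [abs_of_nonneg (by linarith), abs_of_nonpos ha, abs_of_nonneg hb]; ring

lemma mul_abs_sub_rpow_mul_sub_of_mul_nonpos {a b : ℝ} (hab : a * b ≤ 0) (p : ℝ) :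
    a * (|b - a| ^ (p - 2) * (b - a)) = -(|a| * (|a| + |b|) ^ (p - 1)) := by
  have habs := abs_sub_eq_abs_add_abs_of_mul_nonpos hab
  have hmul : a * (b - a) = -(|a| * |b - a|) := by
    rw [habs]
    rcases mul_nonpos_iff.1 hab with ⟨ha, hb⟩ | ⟨ha, hb⟩
    · rw [abs_of_nonneg ha, abs_of_nonpos hb]; ring
    · rw [abs_of_nonpos ha, abs_of_nonneg hb]; ring
  rcases eq_or_ne |b - a| 0 with h0 | h0
  · have ha : |a| = 0 := by linarith [abs_nonneg a, abs_nonneg b]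
    rw [abs_eq_zero.1 ha]; simp
  · rw [mul_left_comm, hmul, ← habs, show p - 1 = p - 2 + 1 by ring, rpow_add_one h0]
    ring

lemma mul_abs_rpow_sub_two_mul_self (a p : ℝ) :
    a * (|a| ^ (p - 2) * a) = |a| * |a| ^ (p - 1) := by
  have h := mul_abs_sub_rpow_mul_sub_of_mul_nonpos (mul_zero a).le p
  simp only [zero_sub, abs_neg, abs_zero, add_zero] at h
  linear_combination -h

/-- Radon's inequality for two terms. -/
lemma add_rpow_le_rpow_sub_one_mul {p a b c d : ℝ} (hp : 1 ≤ p) (ha : 0 ≤ a) (hb : 0 ≤ b)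
    (hc : 0 < c) (hd : 0 < d) :
    (a + b) ^ p ≤ (c + d) ^ (p - 1) * (a ^ p / c ^ (p - 1) + b ^ p / d ^ (p - 1)) := by
  have hcd : 0 < c + d := by linarith
  have hconv := (convexOn_rpow hp).2 (mem_Ici.2 (div_nonneg ha hc.le))
    (mem_Ici.2 (div_nonneg hb hd.le)) (div_nonneg hc.le hcd.le) (div_nonneg hd.le hcd.le)
    (by field_simp)
  have hmid : c / (c + d) * (a / c) + d / (c + d) * (b / d) = (a + b) / (c + d) := by
    field_simp
  simp only [smul_eq_mul, hmid] at hconv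
  rw [div_rpow (by linarith) hcd.le, div_rpow ha hc.le, div_rpow hb hd.le,
    div_le_iff₀ (rpow_pos_of_pos hcd p)] at hconv
  refine hconv.trans_eq ?_
  rw [rpow_sub_one hcd.ne', rpow_sub_one hc.ne', rpow_sub_one hd.ne']
  have := rpow_pos_of_pos hc p
  have := rpow_pos_of_pos hd p
  field_simp

lemma sum_sum_mul_add_eq_two_mul {α : Type*} (s : Finset α) {K : α → α → ℝ}
    (hK : ∀ x y, K x y = K y x) (w : α → ℝ) :
    ∑ x ∈ s, ∑ y ∈ s, K x y * (w x + w y) = 2 * ∑ x ∈ s, ∑ y ∈ s, K x y * w x := by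
  have hswap : ∑ x ∈ s, ∑ y ∈ s, K x y * w y = ∑ x ∈ s, ∑ y ∈ s, K x y * w x := by
    rw [Finset.sum_comm]; simp only [hK]
  simp only [mul_add, Finset.sum_add_distrib, hswap]
  ring

namespace IsWeightedGraph

variable {V : Type*} {μ : V → V → ℝ} {ν : V → ℝ} (hG : IsWeightedGraph μ ν) {Ω : Finset V}

open Classical in
noncomputable def closedNbhd (Ω : Finset V) : Finset V :=
  Ω ∪ Ω.biUnion fun x => (hG.locFin x).toFinset

lemma subset_closedNbhd : Ω ⊆ hG.closedNbhd Ω := by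
  classical exact Finset.subset_union_left

include hG in
lemma mem_closedNbhd_of_ne_zero {x y : V} (hxy : μ x y ≠ 0) (hx : x ∈ Ω) :
    x ∈ hG.closedNbhd Ω ∧ y ∈ hG.closedNbhd Ω := by
  classical exact ⟨Finset.mem_union_left _ hx, Finset.mem_union_right _
    (Finset.mem_biUnion.2 ⟨x, hx, (hG.locFin x).mem_toFinset.2 hxy⟩)⟩

lemma finsum_mul_eq_sum {x : V} (hx : x ∈ Ω) (F : V → ℝ) :
    ∑ᶠ y, μ x y * F y = ∑ y ∈ hG.closedNbhd Ω, μ x y * F y :=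
  finsum_eq_sum_of_support_subset _ fun _ hy =>
    (hG.mem_closedNbhd_of_ne_zero (left_ne_zero_of_mul hy) hx).2

lemma finsum_finsum_eq_sum_sum {G : V → V → ℝ}
    (hsupp : ∀ x y, G x y ≠ 0 → μ x y ≠ 0 ∧ (x ∈ Ω ∨ y ∈ Ω)) :
    ∑ᶠ x, ∑ᶠ y, G x y = ∑ x ∈ hG.closedNbhd Ω, ∑ y ∈ hG.closedNbhd Ω, G x y := by
  have hmem : ∀ x y, G x y ≠ 0 → x ∈ hG.closedNbhd Ω ∧ y ∈ hG.closedNbhd Ω := by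
    intro x y h
    obtain ⟨hxy, hx | hy⟩ := hsupp x y h
    · exact hG.mem_closedNbhd_of_ne_zero hxy hx
    · rw [hG.symm] at hxy
      exact (hG.mem_closedNbhd_of_ne_zero hxy hy).symm
  rw [finsum_congr fun x => finsum_eq_sum_of_support_subset _ fun y hy => (hmem x y hy).2]
  refine finsum_eq_sum_of_support_subset _ fun x hx => ?_
  obtain ⟨y, -, hy⟩ := Finset.exists_ne_zero_of_sum_ne_zero hx
  exact (hmem x y hy).1

lemma energy_eq_sum {p : ℝ} (hp : p ≠ 0) {u : V → ℝ} (hu : ∀ x, x ∉ Ω → u x = 0) :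
    energy μ p u =
      1 / 2 * ∑ x ∈ hG.closedNbhd Ω, ∑ y ∈ hG.closedNbhd Ω, μ x y * |u y - u x| ^ p := by
  rw [energy, hG.finsum_finsum_eq_sum_sum]
  intro x y h
  refine ⟨left_ne_zero_of_mul h, ?_⟩
  by_contra! hxy
  simp [hu x hxy.1, hu y hxy.2, zero_rpow hp] at h

end IsWeightedGraph

lemma pnormP_pos {V : Type*} {ν : V → ℝ} (hν : ∀ x, 0 < ν x) {Ω : Finset V} (p : ℝ)
    {u : V → ℝ} (hu : ∃ x ∈ Ω, u x ≠ 0) : 0 < pnormP ν Ω p u := by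
  obtain ⟨x, hx, hux⟩ := hu
  exact Finset.sum_pos' (fun y _ => by have := hν y; positivity)
    ⟨x, hx, mul_pos (rpow_pos_of_pos (abs_pos.2 hux) p) (hν x)⟩

lemma lamMax_eq_of_forall_energy_le {V : Type*} {μ : V → V → ℝ} {ν : V → ℝ}
    (hν : ∀ x, 0 < ν x) {Ω : Finset V} {p lam : ℝ} {f : V → ℝ}
    (hf0 : ∀ x, x ∉ Ω → f x = 0) (hf : ∃ x ∈ Ω, f x ≠ 0)
    (hEf : energy μ p f = lam * pnormP ν Ω p f)
    (hE : ∀ u : V → ℝ, (∀ x, x ∉ Ω → u x = 0) → energy μ p u ≤ lam * pnormP ν Ω p u) :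
    lamMax μ ν Ω p = lam := by
  refine IsGreatest.csSup_eq ⟨⟨f, hf0, hf, ?_⟩, ?_⟩
  · rw [hEf, mul_div_cancel_right₀ _ (pnormP_pos hν p hf).ne']
  · rintro _ ⟨u, hu0, hu, rfl⟩
    exact (div_le_iff₀ (pnormP_pos hν p hu)).2 (hE u hu0)

lemma abs_sub_rpow_le_picone {V : Type*} {Ω : Finset V} {p : ℝ} (hp : 1 ≤ p) {g u : V → ℝ}
    (hg0 : ∀ x, x ∉ Ω → g x = 0) (hgpos : ∀ x ∈ Ω, 0 < g x) (hu : ∀ x, x ∉ Ω → u x = 0)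
    (x y : V) :
    |u y - u x| ^ p ≤
      (g x + g y) ^ (p - 1) * (|u x| ^ p / g x ^ (p - 1) + |u y| ^ p / g y ^ (p - 1)) := by
  have hp0 : p ≠ 0 := by linarith
  have hcancel : ∀ z ∈ Ω, g z ^ (p - 1) * (|u z| ^ p / g z ^ (p - 1)) = |u z| ^ p :=
    fun z hz => mul_div_cancel₀ _ (rpow_pos_of_pos (hgpos z hz) _).ne'
  refine (rpow_le_rpow (abs_nonneg _) ((abs_sub _ _).trans_eq (add_comm _ _))
    (by linarith)).trans ?_
  by_cases hx : x ∈ Ω <;> by_cases hy : y ∈ Ω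
  · exact add_rpow_le_rpow_sub_one_mul hp (abs_nonneg _) (abs_nonneg _) (hgpos x hx) (hgpos y hy)
  · simp [hu y hy, hg0 y hy, zero_rpow hp0, hcancel x hx]
  · simp [hu x hx, hg0 x hx, zero_rpow hp0, hcancel y hy]
  · simp [hu x hx, hu y hy, hg0 x hx, hg0 y hy, zero_rpow hp0]

/-- The eigenvalue equation of the signless `p`-Laplacian on `Ω`, written for `g ≥ 0`. -/
def IsSignlessEigenfun {V : Type*} (μ : V → V → ℝ) (ν : V → ℝ) (Ω : Finset V) (p : ℝ)
    (g : V → ℝ) (lam : ℝ) : Prop :=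
  ∀ x ∈ Ω, ∑ᶠ y, μ x y * (g x + g y) ^ (p - 1) = lam * (ν x * g x ^ (p - 1))

section SignlessEigenfun

variable {V : Type*} {μ : V → V → ℝ} {ν : V → ℝ} (hG : IsWeightedGraph μ ν) {Ω : Finset V}
  {p lam : ℝ} {g : V → ℝ}

include hG in
lemma sum_mul_eq_half_sum_sum (hg : IsSignlessEigenfun μ ν Ω p g lam) {w : V → ℝ}
    (hw : ∀ x, x ∉ Ω → w x = 0) :
    ∑ x ∈ Ω, w x * (lam * (ν x * g x ^ (p - 1))) =
      1 / 2 * ∑ x ∈ hG.closedNbhd Ω, ∑ y ∈ hG.closedNbhd Ω,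
        μ x y * (g x + g y) ^ (p - 1) * (w x + w y) := by
  rw [sum_sum_mul_add_eq_two_mul _ (fun x y => by rw [hG.symm, add_comm]), ← mul_assoc,
    one_div_mul_cancel two_ne_zero, one_mul]
  symm
  calc ∑ x ∈ hG.closedNbhd Ω, ∑ y ∈ hG.closedNbhd Ω, μ x y * (g x + g y) ^ (p - 1) * w x
      = ∑ x ∈ hG.closedNbhd Ω, w x * ∑ y ∈ hG.closedNbhd Ω, μ x y * (g x + g y) ^ (p - 1) := by
        simp only [mul_comm (w _), Finset.sum_mul]
    _ = ∑ x ∈ Ω, w x * ∑ y ∈ hG.closedNbhd Ω, μ x y * (g x + g y) ^ (p - 1) :=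
        (Finset.sum_subset hG.subset_closedNbhd fun x _ hx => by rw [hw x hx, zero_mul]).symm
    _ = ∑ x ∈ Ω, w x * (lam * (ν x * g x ^ (p - 1))) :=
        Finset.sum_congr rfl fun x hx => by rw [← hG.finsum_mul_eq_sum hx, hg x hx]

include hG in
lemma energy_le_mul_pnormP (hp : 1 ≤ p) (hg0 : ∀ x, x ∉ Ω → g x = 0)
    (hgpos : ∀ x ∈ Ω, 0 < g x) (hg : IsSignlessEigenfun μ ν Ω p g lam) {u : V → ℝ}
    (hu : ∀ x, x ∉ Ω → u x = 0) :
    energy μ p u ≤ lam * pnormP ν Ω p u := by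
  have hp0 : p ≠ 0 := by linarith
  set t : V → ℝ := fun x => |u x| ^ p / g x ^ (p - 1)
  have ht0 : ∀ x, x ∉ Ω → t x = 0 := fun x hx => by simp [t, hu x hx, zero_rpow hp0]
  calc energy μ p u
      = 1 / 2 * ∑ x ∈ hG.closedNbhd Ω, ∑ y ∈ hG.closedNbhd Ω, μ x y * |u y - u x| ^ p :=
        hG.energy_eq_sum hp0 hu
    _ ≤ 1 / 2 * ∑ x ∈ hG.closedNbhd Ω, ∑ y ∈ hG.closedNbhd Ω,
          μ x y * (g x + g y) ^ (p - 1) * (t x + t y) := by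
        refine mul_le_mul_of_nonneg_left
          (Finset.sum_le_sum fun x _ => Finset.sum_le_sum fun y _ => ?_) (by norm_num)
        rw [mul_assoc]
        exact mul_le_mul_of_nonneg_left (abs_sub_rpow_le_picone hp hg0 hgpos hu x y)
          (hG.nonneg x y)
    _ = ∑ x ∈ Ω, t x * (lam * (ν x * g x ^ (p - 1))) :=
        (sum_mul_eq_half_sum_sum hG hg ht0).symm
    _ = lam * pnormP ν Ω p u := by
        rw [pnormP, Finset.mul_sum]
        refine Finset.sum_congr rfl fun x hx => ?_
        have := (rpow_pos_of_pos (hgpos x hx) (p - 1)).ne'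
        simp only [t]
        field_simp

end SignlessEigenfun

lemma mul_nonpos_of_weight_ne_zero {V : Type*} {μ : V → V → ℝ} {ν : V → ℝ}
    (hG : IsWeightedGraph μ ν) {Ω : Finset V} {f : V → ℝ} (hf0 : ∀ x, x ∉ Ω → f x = 0)
    (hsign : ∀ x ∈ Ω, ∀ y ∈ Ω, 0 < μ x y → f x * f y < 0) {x y : V} (hxy : μ x y ≠ 0) :
    f x * f y ≤ 0 := by
  by_cases hx : x ∈ Ω
  · by_cases hy : y ∈ Ω
    · exact (hsign x hx y hy ((hG.nonneg x y).lt_of_ne' hxy)).le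
    · simp [hf0 y hy]
  · simp [hf0 x hx]

lemma ne_zero_of_connOn {V : Type*} {μ : V → V → ℝ} {Ω : Finset V} (hconn : ConnOn μ Ω)
    {f : V → ℝ} (hsign : ∀ x ∈ Ω, ∀ y ∈ Ω, 0 < μ x y → f x * f y < 0) {x₀ : V} (hx₀ : x₀ ∈ Ω)
    (hfx₀ : f x₀ ≠ 0) {x : V} (hx : x ∈ Ω) : f x ≠ 0 := by
  rcases (hconn x hx x₀ hx₀).cases_head with rfl | ⟨y, ⟨-, hy, hxy⟩, -⟩
  · exact hfx₀
  · exact left_ne_zero_of_mul (hsign x hx y hy hxy).ne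

section DirEigenfun

variable {V : Type*} {μ : V → V → ℝ} {ν : V → ℝ} (hG : IsWeightedGraph μ ν) {Ω : Finset V}
  {p lam : ℝ} {f : V → ℝ}

include hG in
lemma IsDirEigenfun.isSignlessEigenfun_abs (hf : IsDirEigenfun μ ν Ω p f lam)
    (halt : ∀ x y, μ x y ≠ 0 → f x * f y ≤ 0) (hfne : ∀ x ∈ Ω, f x ≠ 0) :
    IsSignlessEigenfun μ ν Ω p (fun x => |f x|) lam := by
  intro x hx
  rw [hG.finsum_mul_eq_sum hx]
  have heig := hf.2.2 x hx
  rw [plap, hG.finsum_mul_eq_sum hx, one_div, inv_mul_eq_iff_eq_mul₀ (hG.nuPos x).ne'] at heig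
  have hterm : ∀ y, f x * (μ x y * (|f y - f x| ^ (p - 2) * (f y - f x))) =
      -|f x| * (μ x y * (|f x| + |f y|) ^ (p - 1)) := by
    intro y
    by_cases hxy : μ x y = 0
    · simp [hxy]
    · rw [mul_left_comm, mul_abs_sub_rpow_mul_sub_of_mul_nonpos (halt x y hxy)]
      ring
  -- multiplied by `f x`, every term of the eigenvalue equation becomes `-|f x|` times a
  -- nonnegative one
  have hmul := congrArg (f x * ·) heig
  simp only [Finset.mul_sum, hterm] at hmul
  rw [← Finset.mul_sum] at hmul
  have hfactor : |f x| * (∑ y ∈ hG.closedNbhd Ω, μ x y * (|f x| + |f y|) ^ (p - 1) -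
      lam * (ν x * |f x| ^ (p - 1))) = 0 := by
    linear_combination -hmul + lam * ν x * mul_abs_rpow_sub_two_mul_self (f x) p
  exact sub_eq_zero.1 ((mul_eq_zero.1 hfactor).resolve_left (abs_ne_zero.2 (hfne x hx)))

include hG in
lemma energy_eq_mul_pnormP (hp : p ≠ 0) (hf0 : ∀ x, x ∉ Ω → f x = 0)
    (halt : ∀ x y, μ x y ≠ 0 → f x * f y ≤ 0)
    (habs : IsSignlessEigenfun μ ν Ω p (fun x => |f x|) lam) :
    energy μ p f = lam * pnormP ν Ω p f := by
  have hpow : ∀ c : ℝ, 0 ≤ c → c ^ (p - 1) * c = c ^ p := fun c hc => by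
    rw [← rpow_add_one' hc (by simpa using hp), sub_add_cancel]
  have hg0 : ∀ x, x ∉ Ω → |f x| = 0 := fun x hx => by simp [hf0 x hx]
  calc energy μ p f
      = 1 / 2 * ∑ x ∈ hG.closedNbhd Ω, ∑ y ∈ hG.closedNbhd Ω, μ x y * |f y - f x| ^ p :=
        hG.energy_eq_sum hp hf0
    _ = 1 / 2 * ∑ x ∈ hG.closedNbhd Ω, ∑ y ∈ hG.closedNbhd Ω,
          μ x y * (|f x| + |f y|) ^ (p - 1) * (|f x| + |f y|) := by
        refine congrArg _ (Finset.sum_congr rfl fun x _ => Finset.sum_congr rfl fun y _ => ?_)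
        by_cases hxy : μ x y = 0
        · simp [hxy]
        · rw [abs_sub_eq_abs_add_abs_of_mul_nonpos (halt x y hxy), mul_assoc,
            hpow _ (by positivity)]
    _ = ∑ x ∈ Ω, |f x| * (lam * (ν x * |f x| ^ (p - 1))) :=
        (sum_mul_eq_half_sum_sum hG habs hg0).symm
    _ = lam * pnormP ν Ω p f := by
        rw [pnormP, Finset.mul_sum]
        refine Finset.sum_congr rfl fun x _ => ?_
        rw [← hpow _ (abs_nonneg _)]
        ring

end DirEigenfun

theorem sign_eigenfun_is_max_general {V : Type*} {μ : V → V → ℝ} {ν : V → ℝ}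
    (hG : IsWeightedGraph μ ν) {Ω : Finset V} (hconn : ConnOn μ Ω)
    {p : ℝ} (hp : 1 < p) {f : V → ℝ} {lam : ℝ}
    (hf : IsDirEigenfun μ ν Ω p f lam)
    (hsign : ∀ x ∈ Ω, ∀ y ∈ Ω, 0 < μ x y → f x * f y < 0) :
    lam = lamMax μ ν Ω p := by
  obtain ⟨hf0, ⟨x₀, hx₀, hfx₀⟩, -⟩ := id hf
  have hfne : ∀ x ∈ Ω, f x ≠ 0 := fun x hx => ne_zero_of_connOn hconn hsign hx₀ hfx₀ hx
  have halt : ∀ x y, μ x y ≠ 0 → f x * f y ≤ 0 := fun x y =>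
    mul_nonpos_of_weight_ne_zero hG hf0 hsign
  have habs := hf.isSignlessEigenfun_abs hG halt hfne
  refine (lamMax_eq_of_forall_energy_le hG.nuPos hf0 ⟨x₀, hx₀, hfx₀⟩
    (energy_eq_mul_pnormP hG (by linarith) hf0 halt habs) fun u hu => ?_).symm
  exact energy_le_mul_pnormP hG hp.le (fun x hx => by simp [hf0 x hx])
    (fun x hx => abs_pos.2 (hfne x hx)) habs hu

/-- on a finite connected bipartite subgraph `Ω`, an eigenfunction of the
Dirichlet `p`-Laplacian (`p > 1`) that changes sign along every edge of `Ω` is a maximum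
eigenfunction, i.e. its eigenvalue equals `λ_{m,p}(Ω)`. -/
theorem sign_eigenfun_is_max {V : Type*} {μ : V → V → ℝ} {ν : V → ℝ}
    (hG : IsWeightedGraph μ ν) {Ω : Finset V} (hconn : ConnOn μ Ω)
    (hbip : BipartiteOn μ Ω) {p : ℝ} (hp : 1 < p) {f : V → ℝ} {lam : ℝ}
    (hf : IsDirEigenfun μ ν Ω p f lam)
    (hsign : ∀ x ∈ Ω, ∀ y ∈ Ω, 0 < μ x y → f x * f y < 0) :
    lam = lamMax μ ν Ω p :=
  sign_eigenfun_is_max_general hG hconn hp hf hsign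

end PGraph
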